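/- arXiv:0809.0299 — 11 statements merged into one kernel-verified Lean document; each statement's English description precedes it below -/
import Mathlib

section
/- Let α, β ∈ ℝ with α ≠ 0, β ≠ 0 and α² ≠ β². A 4×4 real matrix S satisfies the three equations S·A(α,β) = −A(α,β)·S, S² = Id, and R₀·S = S·R₀ if and only if S is one of the four diagonal matrices diag(−1,1,−1,1), diag(−1,1,1,−1), diag(1,−1,−1,1), diag(1,−1,1,−1). -/
open Matrix

noncomputable def Amat (α β : ℝ) : Matrix (Fin 4) (Fin 4) ℝ :=
  !![0, -α, 0, 0;
     α, 0, 0, 0;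
     0, 0, 0, -β;
     0, 0, β, 0]

noncomputable def R0 : Matrix (Fin 4) (Fin 4) ℝ :=
  !![1, 0, 0, 0;
     0, -1, 0, 0;
     0, 0, 1, 0;
     0, 0, 0, -1]

theorem eta_fin_four' (A : Matrix (Fin 4) (Fin 4) ℝ) :
    A = !![A 0 0, A 0 1, A 0 2, A 0 3;
           A 1 0, A 1 1, A 1 2, A 1 3;
           A 2 0, A 2 1, A 2 2, A 2 3;
           A 3 0, A 3 1, A 3 2, A 3 3] := by
  ext i j
  fin_cases i <;> fin_cases j <;> rfl

set_option maxHeartbeats 1000000 in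
theorem stmt_3 (α β : ℝ) (hα : α ≠ 0) (hβ : β ≠ 0) (hαβ : α ^ 2 ≠ β ^ 2)
    (S : Matrix (Fin 4) (Fin 4) ℝ) :
    (S * Amat α β = -(Amat α β * S) ∧ S * S = 1 ∧ R0 * S = S * R0) ↔
      (S = !![-1, 0, 0, 0; 0, 1, 0, 0; 0, 0, -1, 0; 0, 0, 0, 1] ∨
       S = !![-1, 0, 0, 0; 0, 1, 0, 0; 0, 0, 1, 0; 0, 0, 0, -1] ∨
       S = !![1, 0, 0, 0; 0, -1, 0, 0; 0, 0, -1, 0; 0, 0, 0, 1] ∨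
       S = !![1, 0, 0, 0; 0, -1, 0, 0; 0, 0, 1, 0; 0, 0, 0, -1]) := by
  constructor
  · rintro ⟨h1, h2, h3⟩
    -- off-parity entries vanish from R0 commutation
    have r01 := congrFun (congrFun h3 0) 1
    have r03 := congrFun (congrFun h3 0) 3
    have r10 := congrFun (congrFun h3 1) 0
    have r12 := congrFun (congrFun h3 1) 2
    have r21 := congrFun (congrFun h3 2) 1
    have r23 := congrFun (congrFun h3 2) 3
    have r30 := congrFun (congrFun h3 3) 0
    have r32 := congrFun (congrFun h3 3) 2
    simp [R0, Matrix.mul_apply, Fin.sum_univ_four, Matrix.vecHead, Matrix.vecTail,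
      Matrix.vecMul, dotProduct] at r01 r03 r10 r12 r21 r23 r30 r32
    have z01 : S 0 1 = 0 := by linarith
    have z03 : S 0 3 = 0 := by linarith
    have z10 : S 1 0 = 0 := by linarith
    have z12 : S 1 2 = 0 := by linarith
    have z21 : S 2 1 = 0 := by linarith
    have z23 : S 2 3 = 0 := by linarith
    have z30 : S 3 0 = 0 := by linarith
    have z32 : S 3 2 = 0 := by linarith
    -- anticommutation equations
    have e01 := congrFun (congrFun h1 0) 1
    have e23 := congrFun (congrFun h1 2) 3
    have e03 := congrFun (congrFun h1 0) 3
    have e12 := congrFun (congrFun h1 1) 2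
    have e21 := congrFun (congrFun h1 2) 1
    have e30 := congrFun (congrFun h1 3) 0
    simp [Amat, Matrix.mul_apply, Fin.sum_univ_four, Matrix.vecHead, Matrix.vecTail,
      Matrix.vecMul, dotProduct] at e01 e23 e03 e12 e21 e30
    have hd : (α - β) * (α + β) ≠ 0 := by
      intro h
      apply hαβ
      nlinarith [h]
    have z13 : S 1 3 = 0 := by
      apply mul_left_cancel₀ hd
      linear_combination -α * e03 - β * e12
    have z02 : S 0 2 = 0 := by
      have : α * S 0 2 = 0 := by linear_combination e12 - β * z13
      exact (mul_eq_zero.1 this).resolve_left hα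
    have z31 : S 3 1 = 0 := by
      apply mul_left_cancel₀ hd
      linear_combination α * e30 + β * e21
    have z20 : S 2 0 = 0 := by
      have : α * S 2 0 = 0 := by linear_combination -e21 - β * z31
      exact (mul_eq_zero.1 this).resolve_left hα
    have h11 : S 1 1 = -S 0 0 := by
      have : α * S 1 1 = α * -S 0 0 := by linarith [e01]
      exact mul_left_cancel₀ hα this
    have h33 : S 3 3 = -S 2 2 := by
      have : β * S 3 3 = β * -S 2 2 := by linear_combination -e23
      exact mul_left_cancel₀ hβ this
    -- involution
    have s00 := congrFun (congrFun h2 0) 0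
    have s22 := congrFun (congrFun h2 2) 2
    simp [Matrix.mul_apply, Fin.sum_univ_four, Matrix.one_apply, z01, z02, z03, z10, z20, z30] at s00
    simp [Matrix.mul_apply, Fin.sum_univ_four, Matrix.one_apply, z21, z23, z12, z32, z02, z20] at s22
    have ha : S 0 0 = 1 ∨ S 0 0 = -1 := mul_self_eq_one_iff.1 s00
    have hdd : S 2 2 = 1 ∨ S 2 2 = -1 := mul_self_eq_one_iff.1 s22
    rw [eta_fin_four' S, z01, z02, z03, z10, z12, z13, z20, z21, z23, z30, z31, z32,
      h11, h33]
    rcases ha with ha | ha <;> rcases hdd with hd2 | hd2 <;> rw [ha, hd2] <;> norm_num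
  · rintro (rfl | rfl | rfl | rfl) <;>
      refine ⟨?_, ?_, ?_⟩ <;>
      ext i j <;>
      fin_cases i <;> fin_cases j <;>
      simp [Amat, R0, Matrix.mul_apply, Fin.sum_univ_four, Matrix.one_apply,
        Matrix.vecHead, Matrix.vecTail]
end

section
/- Let α, β ∈ ℝ, let f₁, f₂, f₃, f₄ : ℝ⁴ → ℝ, and define X : ℝ⁴ → ℝ⁴ by X(x) = A(α,β)·x + (f₁(x), f₂(x), f₃(x), f₄(x)). Let S₁ = diag(−1,1,−1,1). Then X is both R₀-reversible and S₁-reversible if and only if for all (x₁,x₂,y₁,y₂) ∈ ℝ⁴: f₁(x₁,x₂,y₁,y₂) = −f₁(x₁,−x₂,y₁,−y₂) = f₁(−x₁,x₂,−y₁,y₂); f₂(x₁,x₂,y₁,y₂) = f₂(x₁,−x₂,y₁,−y₂) = −f₂(−x₁,x₂,−y₁,y₂); f₃(x₁,x₂,y₁,y₂) = −f₃(x₁,−x₂,y₁,−y₂) = f₃(−x₁,x₂,−y₁,y₂); f₄(x₁,x₂,y₁,y₂) = f₄(x₁,−x₂,y₁,−y₂) = −f₄(−x₁,x₂,−y₁,y₂).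 Moreover, these conditions imply f₁(x₁,0,y₁,0) = f₃(x₁,0,y₁,0) = 0 and f₂(0,x₂,0,y₂) = f₄(0,x₂,0,y₂) = 0 for all x₁,x₂,y₁,y₂ ∈ ℝ. -/
open Matrix

/-- `M`-reversibility of a vector field on ℝ⁴. -/
def MRev (M : Matrix (Fin 4) (Fin 4) ℝ) (X : (Fin 4 → ℝ) → (Fin 4 → ℝ)) : Prop :=
  ∀ x, M *ᵥ X x = -X (M *ᵥ x)

lemma vec4_eta (x : Fin 4 → ℝ) : x = ![x 0, x 1, x 2, x 3] := by
  funext i; fin_cases i <;> rfl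

theorem stmt_5 (α β : ℝ) (f₁ f₂ f₃ f₄ : (Fin 4 → ℝ) → ℝ)
    (X : (Fin 4 → ℝ) → (Fin 4 → ℝ))
    (hX : ∀ x, X x = Amat α β *ᵥ x + ![f₁ x, f₂ x, f₃ x, f₄ x])
    (S₁ : Matrix (Fin 4) (Fin 4) ℝ)
    (hS₁ : S₁ = !![-1, 0, 0, 0; 0, 1, 0, 0; 0, 0, -1, 0; 0, 0, 0, 1]) :
    ((MRev R0 X ∧ MRev S₁ X) ↔
      (∀ x₁ x₂ y₁ y₂ : ℝ,
        (f₁ ![x₁, x₂, y₁, y₂] = -f₁ ![x₁, -x₂, y₁, -y₂] ∧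
         f₁ ![x₁, x₂, y₁, y₂] = f₁ ![-x₁, x₂, -y₁, y₂]) ∧
        (f₂ ![x₁, x₂, y₁, y₂] = f₂ ![x₁, -x₂, y₁, -y₂] ∧
         f₂ ![x₁, x₂, y₁, y₂] = -f₂ ![-x₁, x₂, -y₁, y₂]) ∧
        (f₃ ![x₁, x₂, y₁, y₂] = -f₃ ![x₁, -x₂, y₁, -y₂] ∧
         f₃ ![x₁, x₂, y₁, y₂] = f₃ ![-x₁, x₂, -y₁, y₂]) ∧
        (f₄ ![x₁, x₂, y₁, y₂] = f₄ ![x₁, -x₂, y₁, -y₂] ∧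
         f₄ ![x₁, x₂, y₁, y₂] = -f₄ ![-x₁, x₂, -y₁, y₂]))) ∧
    ((∀ x₁ x₂ y₁ y₂ : ℝ,
        (f₁ ![x₁, x₂, y₁, y₂] = -f₁ ![x₁, -x₂, y₁, -y₂] ∧
         f₁ ![x₁, x₂, y₁, y₂] = f₁ ![-x₁, x₂, -y₁, y₂]) ∧
        (f₂ ![x₁, x₂, y₁, y₂] = f₂ ![x₁, -x₂, y₁, -y₂] ∧
         f₂ ![x₁, x₂, y₁, y₂] = -f₂ ![-x₁, x₂, -y₁, y₂]) ∧
        (f₃ ![x₁, x₂, y₁, y₂] = -f₃ ![x₁, -x₂, y₁, -y₂] ∧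
         f₃ ![x₁, x₂, y₁, y₂] = f₃ ![-x₁, x₂, -y₁, y₂]) ∧
        (f₄ ![x₁, x₂, y₁, y₂] = f₄ ![x₁, -x₂, y₁, -y₂] ∧
         f₄ ![x₁, x₂, y₁, y₂] = -f₄ ![-x₁, x₂, -y₁, y₂])) →
      ∀ x₁ x₂ y₁ y₂ : ℝ,
        f₁ ![x₁, 0, y₁, 0] = 0 ∧ f₃ ![x₁, 0, y₁, 0] = 0 ∧
        f₂ ![0, x₂, 0, y₂] = 0 ∧ f₄ ![0, x₂, 0, y₂] = 0) := by
  subst hS₁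
  have hR0v : ∀ a b c d : ℝ, R0 *ᵥ ![a,b,c,d] = ![a,-b,c,-d] := by
    intro a b c d; funext i
    fin_cases i <;>
      simp [R0, Matrix.mulVec, dotProduct, Fin.sum_univ_four]
  have hS1v : ∀ a b c d : ℝ,
      (!![(-1:ℝ), 0, 0, 0; 0, 1, 0, 0; 0, 0, -1, 0; 0, 0, 0, 1]) *ᵥ ![a,b,c,d]
        = ![-a,b,-c,d] := by
    intro a b c d; funext i
    fin_cases i <;>
      simp [Matrix.mulVec, dotProduct, Fin.sum_univ_four]
  constructor
  · constructor
    · rintro ⟨hR, hS⟩ x₁ x₂ y₁ y₂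
      have hr := hR ![x₁,x₂,y₁,y₂]
      have hs := hS ![x₁,x₂,y₁,y₂]
      rw [hR0v] at hr
      rw [hS1v] at hs
      rw [hX, hX] at hr
      rw [hX, hX] at hs
      rw [funext_iff] at hr hs
      have h0 := hr 0; have h1 := hr 1; have h2 := hr 2; have h3 := hr 3
      have g0 := hs 0; have g1 := hs 1; have g2 := hs 2; have g3 := hs 3
      simp [Amat, R0, Matrix.mulVec, dotProduct, Fin.sum_univ_four,
        Matrix.vecHead, Matrix.vecTail, Function.comp] at h0 h1 h2 h3 g0 g1 g2 g3
      exact ⟨⟨by linarith, by linarith⟩, ⟨by linarith, by linarith⟩,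
        ⟨by linarith, by linarith⟩, ⟨by linarith, by linarith⟩⟩
    · intro H
      constructor
      · intro x
        obtain ⟨⟨h1a,h1b⟩,⟨h2a,h2b⟩,⟨h3a,h3b⟩,⟨h4a,h4b⟩⟩ := H (x 0) (x 1) (x 2) (x 3)
        have hx : x = ![x 0, x 1, x 2, x 3] := vec4_eta x
        rw [hx, hR0v, hX, hX]
        funext i
        fin_cases i <;>
          simp [Amat, R0, Matrix.mulVec, dotProduct, Fin.sum_univ_four,
            Matrix.vecHead, Matrix.vecTail, Function.comp] <;>
          linarith
      · intro x
        obtain ⟨⟨h1a,h1b⟩,⟨h2a,h2b⟩,⟨h3a,h3b⟩,⟨h4a,h4b⟩⟩ := H (x 0) (x 1) (x 2) (x 3)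
        have hx : x = ![x 0, x 1, x 2, x 3] := vec4_eta x
        rw [hx, hS1v, hX, hX]
        funext i
        fin_cases i <;>
          simp [Amat, Matrix.mulVec, dotProduct, Fin.sum_univ_four,
            Matrix.vecHead, Matrix.vecTail, Function.comp] <;>
          linarith
  · intro H x₁ x₂ y₁ y₂
    obtain ⟨⟨h1a,_⟩,_,⟨h3a,_⟩,_⟩ := H x₁ 0 y₁ 0
    obtain ⟨_,⟨_,h2b⟩,_,⟨_,h4b⟩⟩ := H 0 x₂ 0 y₂
    rw [neg_zero] at h1a h3a h2b h4b
    exact ⟨by linarith, by linarith, by linarith, by linarith⟩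
end

section
/- Let α, β ∈ ℝ, let f₁, f₂, f₃, f₄ : ℝ⁴ → ℝ, and define X : ℝ⁴ → ℝ⁴ by X(x) = A(α,β)·x + (f₁(x), f₂(x), f₃(x), f₄(x)). Let S₃ = diag(1,−1,−1,1). Then X is both R₀-reversible and S₃-reversible if and only if for all (x₁,x₂,y₁,y₂) ∈ ℝ⁴: f₁(x₁,x₂,y₁,y₂) = −f₁(x₁,−x₂,y₁,−y₂) = −f₁(x₁,−x₂,−y₁,y₂); f₂(x₁,x₂,y₁,y₂) = f₂(x₁,−x₂,y₁,−y₂) = f₂(x₁,−x₂,−y₁,y₂); f₃(x₁,x₂,y₁,y₂) = −f₃(x₁,−x₂,y₁,−y₂) = f₃(x₁,−x₂,−y₁,y₂); f₄(x₁,x₂,y₁,y₂) = f₄(x₁,−x₂,y₁,−y₂) = −f₄(x₁,−x₂,−y₁,y₂). Moreover, these conditions imply f₁(x₁,0,y₁,0) = f₃(x₁,0,y₁,0) = 0 and f₁(x₁,0,0,y₂) = f₄(x₁,0,0,y₂) = 0 for all x₁,y₁,y₂ ∈ ℝ. -/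
open Matrix

lemma Achar (α β : ℝ) (v : Fin 4 → ℝ) :
    Amat α β *ᵥ v = ![-(α * v 1), α * v 0, -(β * v 3), β * v 2] := by
  funext i; fin_cases i <;>
    simp [Amat, Matrix.mulVec, dotProduct, Fin.sum_univ_four]

lemma genchar (α β : ℝ) (f₁ f₂ f₃ f₄ : (Fin 4 → ℝ) → ℝ)
    (X : (Fin 4 → ℝ) → (Fin 4 → ℝ))
    (hX : ∀ x, X x = Amat α β *ᵥ x + ![f₁ x, f₂ x, f₃ x, f₄ x])
    (M : Matrix (Fin 4) (Fin 4) ℝ) (ε₃ : ℝ) (hε : ε₃ = 1 ∨ ε₃ = -1)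
    (hM : ∀ v : Fin 4 → ℝ, M *ᵥ v = ![v 0, -v 1, ε₃ * v 2, -(ε₃ * v 3)]) :
    MRev M X ↔ ∀ x : Fin 4 → ℝ,
      f₁ x = -f₁ ![x 0, -x 1, ε₃ * x 2, -(ε₃ * x 3)] ∧
      f₂ x = f₂ ![x 0, -x 1, ε₃ * x 2, -(ε₃ * x 3)] ∧
      ε₃ * f₃ x = -f₃ ![x 0, -x 1, ε₃ * x 2, -(ε₃ * x 3)] ∧
      ε₃ * f₄ x = f₄ ![x 0, -x 1, ε₃ * x 2, -(ε₃ * x 3)] := by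
  have hε2 : ε₃ * ε₃ = 1 := by rcases hε with h | h <;> rw [h] <;> ring
  simp only [MRev, hX, hM, Achar]
  constructor
  · intro h x
    have h0 := congrFun (h x) 0
    have h1 := congrFun (h x) 1
    have h2 := congrFun (h x) 2
    have h3 := congrFun (h x) 3
    simp [Achar] at h0 h1 h2 h3
    refine ⟨by linarith, by linarith, by nlinarith [h2], by nlinarith [h3]⟩
  · intro h x
    obtain ⟨h1, h2, h3, h4⟩ := h x
    funext i
    fin_cases i <;> simp [Achar] <;> nlinarith [h1, h2, h3, h4, hε2]

theorem stmt_7 (α β : ℝ) (f₁ f₂ f₃ f₄ : (Fin 4 → ℝ) → ℝ)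
    (X : (Fin 4 → ℝ) → (Fin 4 → ℝ))
    (hX : ∀ x, X x = Amat α β *ᵥ x + ![f₁ x, f₂ x, f₃ x, f₄ x])
    (S₃ : Matrix (Fin 4) (Fin 4) ℝ)
    (hS₃ : S₃ = !![1, 0, 0, 0; 0, -1, 0, 0; 0, 0, -1, 0; 0, 0, 0, 1]) :
    ((MRev R0 X ∧ MRev S₃ X) ↔
      (∀ x₁ x₂ y₁ y₂ : ℝ,
        (f₁ ![x₁, x₂, y₁, y₂] = -f₁ ![x₁, -x₂, y₁, -y₂] ∧
         f₁ ![x₁, x₂, y₁, y₂] = -f₁ ![x₁, -x₂, -y₁, y₂]) ∧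
        (f₂ ![x₁, x₂, y₁, y₂] = f₂ ![x₁, -x₂, y₁, -y₂] ∧
         f₂ ![x₁, x₂, y₁, y₂] = f₂ ![x₁, -x₂, -y₁, y₂]) ∧
        (f₃ ![x₁, x₂, y₁, y₂] = -f₃ ![x₁, -x₂, y₁, -y₂] ∧
         f₃ ![x₁, x₂, y₁, y₂] = f₃ ![x₁, -x₂, -y₁, y₂]) ∧
        (f₄ ![x₁, x₂, y₁, y₂] = f₄ ![x₁, -x₂, y₁, -y₂] ∧
         f₄ ![x₁, x₂, y₁, y₂] = -f₄ ![x₁, -x₂, -y₁, y₂]))) ∧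
    ((∀ x₁ x₂ y₁ y₂ : ℝ,
        (f₁ ![x₁, x₂, y₁, y₂] = -f₁ ![x₁, -x₂, y₁, -y₂] ∧
         f₁ ![x₁, x₂, y₁, y₂] = -f₁ ![x₁, -x₂, -y₁, y₂]) ∧
        (f₂ ![x₁, x₂, y₁, y₂] = f₂ ![x₁, -x₂, y₁, -y₂] ∧
         f₂ ![x₁, x₂, y₁, y₂] = f₂ ![x₁, -x₂, -y₁, y₂]) ∧
        (f₃ ![x₁, x₂, y₁, y₂] = -f₃ ![x₁, -x₂, y₁, -y₂] ∧
         f₃ ![x₁, x₂, y₁, y₂] = f₃ ![x₁, -x₂, -y₁, y₂]) ∧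
        (f₄ ![x₁, x₂, y₁, y₂] = f₄ ![x₁, -x₂, y₁, -y₂] ∧
         f₄ ![x₁, x₂, y₁, y₂] = -f₄ ![x₁, -x₂, -y₁, y₂])) →
      ∀ x₁ y₁ y₂ : ℝ,
        f₁ ![x₁, 0, y₁, 0] = 0 ∧ f₃ ![x₁, 0, y₁, 0] = 0 ∧
        f₁ ![x₁, 0, 0, y₂] = 0 ∧ f₄ ![x₁, 0, 0, y₂] = 0) := by
  have hR0v : ∀ v : Fin 4 → ℝ, R0 *ᵥ v = ![v 0, -v 1, (1:ℝ) * v 2, -((1:ℝ) * v 3)] := by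
    intro v; funext i; fin_cases i <;>
      simp [R0, Matrix.mulVec, dotProduct, Fin.sum_univ_four]
  have hS3v : ∀ v : Fin 4 → ℝ, S₃ *ᵥ v = ![v 0, -v 1, (-1:ℝ) * v 2, -((-1:ℝ) * v 3)] := by
    intro v; funext i; fin_cases i <;>
      simp [hS₃, Matrix.mulVec, dotProduct, Fin.sum_univ_four]
  rw [genchar α β f₁ f₂ f₃ f₄ X hX R0 1 (Or.inl rfl) hR0v,
      genchar α β f₁ f₂ f₃ f₄ X hX S₃ (-1) (Or.inr rfl) hS3v]
  constructor
  · constructor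
    · rintro ⟨hR, hS⟩ x₁ x₂ y₁ y₂
      have h1 := hR ![x₁, x₂, y₁, y₂]
      have h2 := hS ![x₁, x₂, y₁, y₂]
      simp at h1 h2
      obtain ⟨a1, a2, a3, a4⟩ := h1
      obtain ⟨b1, b2, b3, b4⟩ := h2
      exact ⟨⟨a1, b1⟩, ⟨a2, b2⟩, ⟨by linarith, by linarith⟩, ⟨a4, by linarith⟩⟩
    · intro h
      constructor
      · intro x
        obtain ⟨⟨a1, _⟩, ⟨a2, _⟩, ⟨a3, _⟩, ⟨a4, _⟩⟩ := h (x 0) (x 1) (x 2) (x 3)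
        have hx : ![x 0, x 1, x 2, x 3] = x := by
          funext i; fin_cases i <;> rfl
        rw [hx] at a1 a2 a3 a4
        simp only [one_mul]
        exact ⟨a1, a2, by linarith, a4⟩
      · intro x
        obtain ⟨⟨_, a1⟩, ⟨_, a2⟩, ⟨_, a3⟩, ⟨_, a4⟩⟩ := h (x 0) (x 1) (x 2) (x 3)
        have hx : ![x 0, x 1, x 2, x 3] = x := by
          funext i; fin_cases i <;> rfl
        rw [hx] at a1 a2 a3 a4
        simp only [neg_one_mul, neg_neg]
        exact ⟨a1, a2, by linarith, by linarith⟩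
  · intro h x₁ y₁ y₂
    obtain ⟨⟨a1, a2⟩, _, ⟨c1, _⟩, _⟩ := h x₁ 0 y₁ 0
    obtain ⟨⟨b1, b2⟩, _, _, ⟨_, d2⟩⟩ := h x₁ 0 0 y₂
    simp only [neg_zero] at a1 a2 b1 b2 c1 d2
    exact ⟨by linarith, by linarith, by linarith, by linarith⟩
end

section
/- Let α, β ∈ ℝ and let B denote the 2×2 matrix with rows (−1/2, √3/2) and (√3/2, 1/2), and D = diag(1,−1). Consider the three block-diagonal 4×4 real matrices S₁ = B ⊕ B, S₂ = B ⊕ D, S₃ = D ⊕ B. Then each Sⱼ (j = 1,2,3) satisfies Sⱼ·A(α,β) = −A(α,β)·Sⱼ, Sⱼ² = Id, (R₀·Sⱼ)³ = Id and R₀·Sⱼ ≠ Id; moreover, regarding R₀ and Sⱼ as elements of GL(4,ℝ), the subgroup of GL(4,ℝ) generated by {R₀, Sⱼ} is isomorphic to the dihedral group of order 6 (DihedralGroup 3). -/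
open Matrix

/-- The block `B`: rows `(-1/2, √3/2)` and `(√3/2, 1/2)`. -/
noncomputable def Bblock : Matrix (Fin 2) (Fin 2) ℝ :=
  !![-(1 / 2 : ℝ), Real.sqrt 3 / 2; Real.sqrt 3 / 2, 1 / 2]

/-- The block `D = diag(1, -1)`. -/
noncomputable def Dblock : Matrix (Fin 2) (Fin 2) ℝ :=
  !![(1 : ℝ), 0; 0, -1]

/-- Direct sum of two `2 × 2` blocks into a `4 × 4` matrix. -/
noncomputable def blockSum (P Q : Matrix (Fin 2) (Fin 2) ℝ) : Matrix (Fin 4) (Fin 4) ℝ :=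
  !![P 0 0, P 0 1, 0, 0;
     P 1 0, P 1 1, 0, 0;
     0, 0, Q 0 0, Q 0 1;
     0, 0, Q 1 0, Q 1 1]


theorem dih_closure_aux {G : Type*} [Group G] (g h : G)
    (hg2 : g * g = 1) (hh2 : h * h = 1) (hx3 : (g * h) ^ 3 = 1)
    (hgne : g ≠ 1) (hhne : h ≠ 1) (hxne : g * h ≠ 1) :
    Nonempty ((Subgroup.closure {g, h} : Subgroup G) ≃* DihedralGroup 3) := by
  set x := g * h with hxdef
  clear_value x
  have hgi : g⁻¹ = g := inv_eq_of_mul_eq_one_right hg2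
  have hhi : h⁻¹ = h := inv_eq_of_mul_eq_one_right hh2
  have hxinv : x⁻¹ = g * x * g⁻¹ := by
    rw [hxdef, _root_.mul_inv_rev, hgi, hhi]
    rw [show g * (g * h) * g = g * g * (h * g) by group, hg2, one_mul]
  have hconj : ∀ m : ℤ, x ^ m * g = g * x ^ (-m) := by
    intro m
    have hneg : x ^ (-m) = g * x ^ m * g⁻¹ := by
      rw [_root_.zpow_neg, ← _root_.inv_zpow, hxinv, conj_zpow]
    rw [hneg, hgi, ← mul_assoc, ← mul_assoc, hg2, one_mul]
  have hψ : ∀ a b : ZMod 3, x ^ (((a + b).val : ℕ) : ℤ) =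
      x ^ ((a.val : ℕ) : ℤ) * x ^ ((b.val : ℕ) : ℤ) := by
    intro a b
    rw [← _root_.zpow_add, ZMod.val_add, zpow_eq_zpow_emod' ((a.val : ℤ) + (b.val : ℤ)) hx3]
    congr 1
    try omega
  have hψ' : ∀ a b : ZMod 3, x ^ (((a - b).val : ℕ) : ℤ) =
      x ^ ((a.val : ℕ) : ℤ) * (x ^ ((b.val : ℕ) : ℤ))⁻¹ := by
    intro a b
    have h0 := hψ (a - b) b
    rw [show a - b + b = a by ring] at h0
    rw [h0]; group
  let φ : DihedralGroup 3 →* G :=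
  { toFun := fun m => match m with
      | DihedralGroup.r i => x ^ ((i.val : ℕ) : ℤ)
      | DihedralGroup.sr i => g * x ^ ((i.val : ℕ) : ℤ)
    map_one' := by
      show x ^ (((0 : ZMod 3).val : ℕ) : ℤ) = 1
      norm_num [ZMod.val_zero]
    map_mul' := by
      rintro (i | i) (j | j)
      · show x ^ (((i + j).val : ℕ) : ℤ) = x ^ ((i.val : ℕ) : ℤ) * x ^ ((j.val : ℕ) : ℤ)
        exact hψ i j
      · show g * x ^ (((j - i).val : ℕ) : ℤ) =
          x ^ ((i.val : ℕ) : ℤ) * (g * x ^ ((j.val : ℕ) : ℤ))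
        rw [hψ' j i, show x ^ ((i.val : ℕ) : ℤ) * (g * x ^ ((j.val : ℕ) : ℤ)) =
          x ^ ((i.val : ℕ) : ℤ) * g * x ^ ((j.val : ℕ) : ℤ) from by group, hconj]
        group
      · show g * x ^ (((i + j).val : ℕ) : ℤ) =
          g * x ^ ((i.val : ℕ) : ℤ) * x ^ ((j.val : ℕ) : ℤ)
        rw [hψ i j, mul_assoc]
      · show x ^ (((j - i).val : ℕ) : ℤ) =
          g * x ^ ((i.val : ℕ) : ℤ) * (g * x ^ ((j.val : ℕ) : ℤ))
        rw [hψ' j i, show g * x ^ ((i.val : ℕ) : ℤ) * (g * x ^ ((j.val : ℕ) : ℤ)) =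
          g * (x ^ ((i.val : ℕ) : ℤ) * g) * x ^ ((j.val : ℕ) : ℤ) from by group, hconj,
          show g * (g * x ^ (-((i.val : ℕ) : ℤ))) * x ^ ((j.val : ℕ) : ℤ) =
          g * g * (x ^ (-((i.val : ℕ) : ℤ)) * x ^ ((j.val : ℕ) : ℤ)) from by group, hg2, one_mul]
        group }
  have hφr : ∀ i, φ (DihedralGroup.r i) = x ^ ((i.val : ℕ) : ℤ) := fun _ => rfl
  have hφsr : ∀ i, φ (DihedralGroup.sr i) = g * x ^ ((i.val : ℕ) : ℤ) := fun _ => rfl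
  have hx2ne : x * x ≠ 1 := by
    intro hc
    apply hxne
    have h3 : x ^ 3 = x * x * x := by rw [pow_succ, pow_succ, pow_one]
    rw [hc, one_mul] at h3
    rw [← h3, hx3]
  have hinj : Function.Injective φ := by
    rw [injective_iff_map_eq_one]
    rintro (i | i) hone
    · rw [hφr] at hone
      have hv : i.val = 0 ∨ i.val = 1 ∨ i.val = 2 := by
        have := ZMod.val_lt i; omega
      rcases hv with hv | hv | hv
      · rw [show i = 0 from by rwa [← ZMod.val_eq_zero], DihedralGroup.one_def]
      · rw [hv] at hone; norm_num at hone; exact absurd hone hxne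
      · rw [hv, show (((2:ℕ)):ℤ) = 2 by norm_num, zpow_two] at hone
        exact absurd hone hx2ne
    · rw [hφsr] at hone
      have hv : i.val = 0 ∨ i.val = 1 ∨ i.val = 2 := by
        have := ZMod.val_lt i; omega
      exfalso
      rcases hv with hv | hv | hv
      · rw [hv] at hone; norm_num at hone; exact hgne hone
      · rw [hv] at hone
        norm_num at hone
        apply hhne
        have hgx : g * (g * h) = h := by rw [← mul_assoc, hg2, one_mul]
        rw [← hgx, ← hxdef, hone]
      · rw [hv, show (((2:ℕ)):ℤ) = 2 by norm_num, zpow_two] at hone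
        have e1 : x * x = g := by
          have h5 : g * (g * (x * x)) = g * 1 := by rw [hone]
          rwa [← mul_assoc, hg2, one_mul, mul_one] at h5
        have e2 : x * g = 1 := by rw [← e1, show x * (x * x) = x ^ 3 by rw [pow_succ, pow_succ, pow_one, mul_assoc], hx3]
        have e3 : x = g := by
          rw [← hgi]; exact eq_inv_of_mul_eq_one_left e2
        have e4 : x * x = x * 1 := by rw [mul_one, e1, ← e3]
        exact hxne (mul_left_cancel e4)
  have hrange : φ.range = Subgroup.closure {g, h} := by
    apply le_antisymm
    · rintro y ⟨a, rfl⟩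
      have hgmem : g ∈ Subgroup.closure {g, h} :=
        Subgroup.subset_closure (Set.mem_insert _ _)
      have hhmem : h ∈ Subgroup.closure {g, h} :=
        Subgroup.subset_closure (Set.mem_insert_of_mem _ rfl)
      have hxmem : x ∈ Subgroup.closure {g, h} := hxdef ▸ mul_mem hgmem hhmem
      cases a with
      | r i => exact zpow_mem hxmem _
      | sr i => exact mul_mem hgmem (zpow_mem hxmem _)
    · rw [Subgroup.closure_le]
      rintro y (rfl | rfl)
      · refine ⟨DihedralGroup.sr 0, ?_⟩
        rw [hφsr, ZMod.val_zero, Nat.cast_zero, zpow_zero, mul_one]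
      · refine ⟨DihedralGroup.sr 1, ?_⟩
        rw [hφsr, ZMod.val_one, Nat.cast_one, zpow_one, hxdef, ← mul_assoc, hg2, one_mul]
  exact ⟨(MulEquiv.subgroupCongr hrange).symm.trans (MonoidHom.ofInjective hinj).symm⟩


theorem blockSum_mul (P Q P' Q' : Matrix (Fin 2) (Fin 2) ℝ) :
    blockSum P Q * blockSum P' Q' = blockSum (P * P') (Q * Q') := by
  ext i j
  fin_cases i <;> fin_cases j <;>
    simp [blockSum, Matrix.mul_apply, Fin.sum_univ_four, Fin.sum_univ_two,
      Matrix.vecHead, Matrix.vecTail]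
theorem blockSum_one : blockSum 1 1 = 1 := by
  ext i j
  fin_cases i <;> fin_cases j <;>
    simp [blockSum, Matrix.one_apply, Matrix.vecHead, Matrix.vecTail]
theorem blockSum_neg (P Q : Matrix (Fin 2) (Fin 2) ℝ) :
    blockSum (-P) (-Q) = -(blockSum P Q) := by
  ext i j
  fin_cases i <;> fin_cases j <;>
    simp [blockSum, Matrix.vecHead, Matrix.vecTail]
theorem R0_eq : R0 = blockSum Dblock Dblock := by
  ext i j
  fin_cases i <;> fin_cases j <;>
    simp [R0, blockSum, Dblock, Matrix.vecHead, Matrix.vecTail]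
theorem Amat_eq (α β : ℝ) : Amat α β = blockSum !![0, -α; α, 0] !![0, -β; β, 0] := by
  ext i j
  fin_cases i <;> fin_cases j <;>
    simp [Amat, blockSum, Matrix.vecHead, Matrix.vecTail]
-- 2x2 facts
theorem BB : Bblock * Bblock = 1 := by
  have h3 : Real.sqrt 3 * Real.sqrt 3 = 3 := Real.mul_self_sqrt (by norm_num)
  ext i j
  fin_cases i <;> fin_cases j <;>
    simp [Bblock, Matrix.mul_apply, Fin.sum_univ_two, Matrix.one_apply,
      Matrix.vecHead, Matrix.vecTail] <;> nlinarith [h3]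
theorem DD : Dblock * Dblock = 1 := by
  ext i j
  fin_cases i <;> fin_cases j <;>
    simp [Dblock, Matrix.mul_apply, Fin.sum_univ_two, Matrix.one_apply,
      Matrix.vecHead, Matrix.vecTail]
theorem Banti (α : ℝ) : Bblock * !![0, -α; α, 0] = -(!![0, -α; α, 0] * Bblock) := by
  ext i j
  fin_cases i <;> fin_cases j <;>
    simp [Bblock, Matrix.mul_apply, Fin.sum_univ_two, Matrix.vecHead, Matrix.vecTail] <;> ring
theorem Danti (α : ℝ) : Dblock * !![0, -α; α, 0] = -(!![0, -α; α, 0] * Dblock) := by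
  ext i j
  fin_cases i <;> fin_cases j <;>
    simp [Dblock, Matrix.mul_apply, Fin.sum_univ_two, Matrix.vecHead, Matrix.vecTail] <;> ring
theorem DBcube : Dblock * Bblock * (Dblock * Bblock) * (Dblock * Bblock) = 1 := by
  have h3 : Real.sqrt 3 * Real.sqrt 3 = 3 := Real.mul_self_sqrt (by norm_num)
  have hDB : Dblock * Bblock = !![-(1/2 : ℝ), Real.sqrt 3 / 2; -(Real.sqrt 3 / 2), -(1/2)] := by
    ext i j
    fin_cases i <;> fin_cases j <;>
      simp [Dblock, Bblock, Matrix.mul_apply, Fin.sum_univ_two, Matrix.vecHead, Matrix.vecTail]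
  rw [hDB]
  ext i j
  fin_cases i <;> fin_cases j <;>
    simp [Matrix.mul_apply, Fin.sum_univ_two, Matrix.one_apply, Matrix.vecHead, Matrix.vecTail] <;>
    first
      | nlinarith [h3]
      | linear_combination (-(Real.sqrt 3) / 8) * h3
      | linear_combination ((Real.sqrt 3) / 8) * h3
theorem Bne1 : Bblock ≠ 1 := by
  intro hc
  have := congrFun (congrFun hc 1) 1
  norm_num [Bblock, Matrix.one_apply] at this
theorem Dne1' : (Dblock : Matrix (Fin 2) (Fin 2) ℝ) ≠ 1 := by
  intro hc
  have := congrFun (congrFun hc 1) 1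
  norm_num [Dblock, Matrix.one_apply] at this
theorem DBne1 : Dblock * Bblock ≠ 1 := by
  intro hc
  have := congrFun (congrFun hc 1) 1
  norm_num [Dblock, Bblock, Matrix.mul_apply, Fin.sum_univ_two, Matrix.one_apply,
    Matrix.vecHead, Matrix.vecTail] at this
theorem blockSum_ne_one_left (P Q : Matrix (Fin 2) (Fin 2) ℝ) (hP : P ≠ 1) :
    blockSum P Q ≠ 1 := by
  intro hc
  apply hP
  ext i j
  fin_cases i <;> fin_cases j
  · have := congrFun (congrFun hc 0) 0
    simpa [blockSum, Matrix.one_apply, Matrix.vecHead, Matrix.vecTail] using this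
  · have := congrFun (congrFun hc 0) 1
    simpa [blockSum, Matrix.one_apply, Matrix.vecHead, Matrix.vecTail] using this
  · have := congrFun (congrFun hc 1) 0
    simpa [blockSum, Matrix.one_apply, Matrix.vecHead, Matrix.vecTail] using this
  · have := congrFun (congrFun hc 1) 1
    simpa [blockSum, Matrix.one_apply, Matrix.vecHead, Matrix.vecTail] using this
theorem blockSum_ne_one_right (P Q : Matrix (Fin 2) (Fin 2) ℝ) (hQ : Q ≠ 1) :
    blockSum P Q ≠ 1 := by
  intro hc
  apply hQ
  ext i j
  fin_cases i <;> fin_cases j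
  · have := congrFun (congrFun hc 2) 2
    simpa [blockSum, Matrix.one_apply, Matrix.vecHead, Matrix.vecTail] using this
  · have := congrFun (congrFun hc 2) 3
    simpa [blockSum, Matrix.one_apply, Matrix.vecHead, Matrix.vecTail] using this
  · have := congrFun (congrFun hc 3) 2
    simpa [blockSum, Matrix.one_apply, Matrix.vecHead, Matrix.vecTail] using this
  · have := congrFun (congrFun hc 3) 3
    simpa [blockSum, Matrix.one_apply, Matrix.vecHead, Matrix.vecTail] using this


theorem gl_part (S : Matrix (Fin 4) (Fin 4) ℝ) (hS2 : S * S = 1)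
    (hx3 : (R0 * S) ^ 3 = 1) (hSne : S ≠ 1) (hxne : R0 * S ≠ 1) :
    ∀ (g h : GL (Fin 4) ℝ),
      (g : Matrix (Fin 4) (Fin 4) ℝ) = R0 → (h : Matrix (Fin 4) (Fin 4) ℝ) = S →
      Nonempty ((Subgroup.closure {g, h} : Subgroup (GL (Fin 4) ℝ)) ≃* DihedralGroup 3) := by
  intro g h hg hh
  have hR2 : R0 * R0 = 1 := by rw [R0_eq, blockSum_mul, DD, blockSum_one]
  have hRne : R0 ≠ 1 := by rw [R0_eq]; exact blockSum_ne_one_right _ _ Dne1'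
  have hg2 : g * g = 1 := Units.ext (by rw [Units.val_mul, hg, hR2, Units.val_one])
  have hh2 : h * h = 1 := Units.ext (by rw [Units.val_mul, hh, hS2, Units.val_one])
  have hx3' : (g * h) ^ 3 = 1 := Units.ext (by
    rw [Units.val_pow_eq_pow_val, Units.val_mul, hg, hh, hx3, Units.val_one])
  have hgne : g ≠ 1 := fun hc => hRne (by rw [← hg, hc, Units.val_one])
  have hhne : h ≠ 1 := fun hc => hSne (by rw [← hh, hc, Units.val_one])
  have hxne' : g * h ≠ 1 := fun hc => hxne (by
    rw [← hg, ← hh, ← Units.val_mul, hc, Units.val_one])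
  exact dih_closure_aux g h hg2 hh2 hx3' hgne hhne hxne'

theorem DDcube : Dblock * Dblock * (Dblock * Dblock) * (Dblock * Dblock) = 1 := by
  rw [DD, one_mul, one_mul]


theorem stmt_8 (α β : ℝ) (S : Matrix (Fin 4) (Fin 4) ℝ)
    (hS : S = blockSum Bblock Bblock ∨ S = blockSum Bblock Dblock ∨
          S = blockSum Dblock Bblock) :
    S * Amat α β = -(Amat α β * S) ∧ S * S = 1 ∧
    (R0 * S) ^ 3 = 1 ∧ R0 * S ≠ 1 ∧
    ∀ (g h : GL (Fin 4) ℝ),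
      (g : Matrix (Fin 4) (Fin 4) ℝ) = R0 → (h : Matrix (Fin 4) (Fin 4) ℝ) = S →
      Nonempty ((Subgroup.closure {g, h} : Subgroup (GL (Fin 4) ℝ)) ≃* DihedralGroup 3) := by
  rcases hS with rfl | rfl | rfl
  · have hanti : blockSum Bblock Bblock * Amat α β = -(Amat α β * blockSum Bblock Bblock) := by
      rw [Amat_eq α β, blockSum_mul, blockSum_mul, Banti, Banti, blockSum_neg]
    have hs2 : blockSum Bblock Bblock * blockSum Bblock Bblock = 1 := by
      rw [blockSum_mul, BB, blockSum_one]
    have hx3 : (R0 * blockSum Bblock Bblock) ^ 3 = 1 := by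
      rw [pow_succ, pow_succ, pow_one, R0_eq, blockSum_mul, blockSum_mul, blockSum_mul,
        DBcube, blockSum_one]
    have hxne : R0 * blockSum Bblock Bblock ≠ 1 := by
      rw [R0_eq, blockSum_mul]
      exact blockSum_ne_one_left _ _ DBne1
    have hsne : blockSum Bblock Bblock ≠ 1 := blockSum_ne_one_left _ _ Bne1
    exact ⟨hanti, hs2, hx3, hxne, gl_part _ hs2 hx3 hsne hxne⟩
  · have hanti : blockSum Bblock Dblock * Amat α β = -(Amat α β * blockSum Bblock Dblock) := by
      rw [Amat_eq α β, blockSum_mul, blockSum_mul, Banti, Danti, blockSum_neg]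
    have hs2 : blockSum Bblock Dblock * blockSum Bblock Dblock = 1 := by
      rw [blockSum_mul, BB, DD, blockSum_one]
    have hx3 : (R0 * blockSum Bblock Dblock) ^ 3 = 1 := by
      rw [pow_succ, pow_succ, pow_one, R0_eq, blockSum_mul, blockSum_mul, blockSum_mul,
        DBcube, DDcube, blockSum_one]
    have hxne : R0 * blockSum Bblock Dblock ≠ 1 := by
      rw [R0_eq, blockSum_mul]
      exact blockSum_ne_one_left _ _ DBne1
    have hsne : blockSum Bblock Dblock ≠ 1 := blockSum_ne_one_left _ _ Bne1
    exact ⟨hanti, hs2, hx3, hxne, gl_part _ hs2 hx3 hsne hxne⟩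
  · have hanti : blockSum Dblock Bblock * Amat α β = -(Amat α β * blockSum Dblock Bblock) := by
      rw [Amat_eq α β, blockSum_mul, blockSum_mul, Danti, Banti, blockSum_neg]
    have hs2 : blockSum Dblock Bblock * blockSum Dblock Bblock = 1 := by
      rw [blockSum_mul, BB, DD, blockSum_one]
    have hx3 : (R0 * blockSum Dblock Bblock) ^ 3 = 1 := by
      rw [pow_succ, pow_succ, pow_one, R0_eq, blockSum_mul, blockSum_mul, blockSum_mul,
        DBcube, DDcube, blockSum_one]
    have hxne : R0 * blockSum Dblock Bblock ≠ 1 := by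
      rw [R0_eq, blockSum_mul]
      exact blockSum_ne_one_right _ _ DBne1
    have hsne : blockSum Dblock Bblock ≠ 1 := blockSum_ne_one_right _ _ Bne1
    exact ⟨hanti, hs2, hx3, hxne, gl_part _ hs2 hx3 hsne hxne⟩
end

section
/- Let α, β ∈ ℝ with α ≠ 0, β ≠ 0 and α² ≠ β². Let E₀ = diag(1,−1), E₂ = diag(−1,1), P = the 2×2 matrix with rows (0,1),(1,0), and N = the 2×2 matrix with rows (0,−1),(−1,0). A 4×4 real matrix S satisfies S·A(α,β) = −A(α,β)·S, S² = Id, (R₀·S)⁴ = Id and (R₀·S)² ≠ Id if and only if S is one of the following twelve block-diagonal matrices (each a direct sum of two 2×2 blocks): N ⊕ E₀, P ⊕ E₀, E₂ ⊕ P, E₂ ⊕ N, E₀ ⊕ P, E₀ ⊕ N, P ⊕ P, N ⊕ N, P ⊕ E₂, N ⊕ E₂, P ⊕ N, N ⊕ P. -/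
open Matrix

noncomputable def E0 : Matrix (Fin 2) (Fin 2) ℝ := !![(1 : ℝ), 0; 0, -1]

noncomputable def E2 : Matrix (Fin 2) (Fin 2) ℝ := !![(-1 : ℝ), 0; 0, 1]

noncomputable def Pm : Matrix (Fin 2) (Fin 2) ℝ := !![(0 : ℝ), 1; 1, 0]

noncomputable def Nm : Matrix (Fin 2) (Fin 2) ℝ := !![(0 : ℝ), -1; -1, 0]

/-- Auxiliary: the general block-diagonal shape forced by the anticommutation relation. -/
noncomputable def Mm (a b k l : ℝ) : Matrix (Fin 4) (Fin 4) ℝ :=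
  !![a,b,0,0; b,-a,0,0; 0,0,k,l; 0,0,l,-k]

lemma Tsq (a b k l : ℝ) :
    (R0 * Mm a b k l) * (R0 * Mm a b k l) =
    !![a^2-b^2, 2*(a*b), 0, 0; -(2*(a*b)), a^2-b^2, 0, 0;
       0, 0, k^2-l^2, 2*(k*l); 0, 0, -(2*(k*l)), k^2-l^2] := by
  ext i j
  fin_cases i <;> fin_cases j <;>
    simp [Mm, R0, Matrix.mul_apply, Fin.sum_univ_four, Matrix.vecHead, Matrix.vecTail] <;> ring

lemma Tpow4 (a b k l : ℝ) :
    (R0 * Mm a b k l) ^ 4 =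
    !![(a^2-b^2)^2 - (2*(a*b))^2, 2*(2*(a*b)*(a^2-b^2)), 0, 0;
       -(2*(2*(a*b)*(a^2-b^2))), (a^2-b^2)^2 - (2*(a*b))^2, 0, 0;
       0, 0, (k^2-l^2)^2 - (2*(k*l))^2, 2*(2*(k*l)*(k^2-l^2));
       0, 0, -(2*(2*(k*l)*(k^2-l^2))), (k^2-l^2)^2 - (2*(k*l))^2] := by
  have h4 : (R0 * Mm a b k l) ^ 4 = ((R0 * Mm a b k l) ^ 2) ^ 2 := by
    rw [← pow_mul]
  rw [h4, pow_two, pow_two, Tsq]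
  ext i j
  fin_cases i <;> fin_cases j <;>
    simp [Matrix.mul_apply, Fin.sum_univ_four, Matrix.vecHead, Matrix.vecTail] <;> ring

lemma bs1 : blockSum Nm E0 = Mm 0 (-1) 1 0 := by
  ext i j; fin_cases i <;> fin_cases j <;> norm_num [blockSum, Mm, Nm, E0]
lemma bs2 : blockSum Pm E0 = Mm 0 1 1 0 := by
  ext i j; fin_cases i <;> fin_cases j <;> norm_num [blockSum, Mm, Pm, E0]
lemma bs3 : blockSum E2 Pm = Mm (-1) 0 0 1 := by
  ext i j; fin_cases i <;> fin_cases j <;> norm_num [blockSum, Mm, E2, Pm]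
lemma bs4 : blockSum E2 Nm = Mm (-1) 0 0 (-1) := by
  ext i j; fin_cases i <;> fin_cases j <;> norm_num [blockSum, Mm, E2, Nm]
lemma bs5 : blockSum E0 Pm = Mm 1 0 0 1 := by
  ext i j; fin_cases i <;> fin_cases j <;> norm_num [blockSum, Mm, E0, Pm]
lemma bs6 : blockSum E0 Nm = Mm 1 0 0 (-1) := by
  ext i j; fin_cases i <;> fin_cases j <;> norm_num [blockSum, Mm, E0, Nm]
lemma bs7 : blockSum Pm Pm = Mm 0 1 0 1 := by
  ext i j; fin_cases i <;> fin_cases j <;> norm_num [blockSum, Mm, Pm]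
lemma bs8 : blockSum Nm Nm = Mm 0 (-1) 0 (-1) := by
  ext i j; fin_cases i <;> fin_cases j <;> norm_num [blockSum, Mm, Nm]
lemma bs9 : blockSum Pm E2 = Mm 0 1 (-1) 0 := by
  ext i j; fin_cases i <;> fin_cases j <;> norm_num [blockSum, Mm, Pm, E2]
lemma bs10 : blockSum Nm E2 = Mm 0 (-1) (-1) 0 := by
  ext i j; fin_cases i <;> fin_cases j <;> norm_num [blockSum, Mm, Nm, E2]
lemma bs11 : blockSum Pm Nm = Mm 0 1 0 (-1) := by
  ext i j; fin_cases i <;> fin_cases j <;> norm_num [blockSum, Mm, Pm, Nm]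
lemma bs12 : blockSum Nm Pm = Mm 0 (-1) 0 1 := by
  ext i j; fin_cases i <;> fin_cases j <;> norm_num [blockSum, Mm, Nm, Pm]

set_option maxHeartbeats 1000000 in
lemma main_rev (α β a b k l : ℝ) (h1 : a^2+b^2 = 1) (h2 : k^2+l^2 = 1)
    (hab : a*b = 0) (hkl : k*l = 0) (hne : a = 0 ∨ k = 0) :
    Mm a b k l * Amat α β = -(Amat α β * Mm a b k l) ∧ Mm a b k l * Mm a b k l = 1 ∧
      (R0 * Mm a b k l) ^ 4 = 1 ∧ (R0 * Mm a b k l) ^ 2 ≠ 1 := by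
  refine ⟨?_, ?_, ?_, ?_⟩
  · ext i j
    fin_cases i <;> fin_cases j <;>
      simp [Mm, Amat, Matrix.mul_apply, Fin.sum_univ_four, Matrix.vecHead, Matrix.vecTail] <;> ring
  · ext i j
    fin_cases i <;> fin_cases j <;>
      simp [Mm, Matrix.mul_apply, Fin.sum_univ_four, Matrix.one_apply, Matrix.vecHead,
        Matrix.vecTail] <;> nlinarith
  · rw [Tpow4]
    ext i j
    fin_cases i <;> fin_cases j <;>
      simp [Matrix.one_apply, Matrix.vecHead, Matrix.vecTail] <;>
      first
      | nlinarith
      | exact Or.inl (mul_eq_zero.1 hab)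
      | exact Or.inl (mul_eq_zero.1 hkl)
  · intro h
    rw [pow_two, Tsq] at h
    have h00 := Matrix.ext_iff.2 h 0 0
    have h22 := Matrix.ext_iff.2 h 2 2
    simp [Matrix.one_apply, Matrix.vecHead, Matrix.vecTail] at h00 h22
    rcases hne with rfl | rfl
    · nlinarith
    · nlinarith

set_option maxHeartbeats 1000000 in
theorem stmt_9 (α β : ℝ) (hα : α ≠ 0) (hβ : β ≠ 0) (hαβ : α ^ 2 ≠ β ^ 2)
    (S : Matrix (Fin 4) (Fin 4) ℝ) :
    (S * Amat α β = -(Amat α β * S) ∧ S * S = 1 ∧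
      (R0 * S) ^ 4 = 1 ∧ (R0 * S) ^ 2 ≠ 1) ↔
    (S = blockSum Nm E0 ∨ S = blockSum Pm E0 ∨
     S = blockSum E2 Pm ∨ S = blockSum E2 Nm ∨
     S = blockSum E0 Pm ∨ S = blockSum E0 Nm ∨
     S = blockSum Pm Pm ∨ S = blockSum Nm Nm ∨
     S = blockSum Pm E2 ∨ S = blockSum Nm E2 ∨
     S = blockSum Pm Nm ∨ S = blockSum Nm Pm) := by
  constructor
  · rintro ⟨h1, h2, h3, h4⟩
    obtain ⟨a,b,c,d,e,f,g,h,i,j,k,l,m,n,o,p, rfl⟩ :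
        ∃ a b c d e f g h i j k l m n o p : ℝ,
          S = !![a,b,c,d;e,f,g,h;i,j,k,l;m,n,o,p] :=
      ⟨_,_,_,_,_,_,_,_,_,_,_,_,_,_,_,_, by ext i j; fin_cases i <;> fin_cases j <;> rfl⟩
    have hne : α^2 - β^2 ≠ 0 := sub_ne_zero.2 hαβ
    have H := Matrix.ext_iff.2 h1
    have e00 := H 0 0; have e01 := H 0 1; have e02 := H 0 2; have e03 := H 0 3
    have e12 := H 1 2; have e13 := H 1 3
    have e20 := H 2 0; have e21 := H 2 1; have e22 := H 2 2; have e23 := H 2 3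
    have e30 := H 3 0; have e31 := H 3 1
    simp [Amat, Matrix.mul_apply, Fin.sum_univ_four, Matrix.vecHead, Matrix.vecTail] at e00 e01 e02 e03 e12 e13 e20 e21 e22 e23 e30 e31
    have hd : d = 0 :=
      (mul_eq_zero.1 (show (α^2-β^2) * d = 0 by linear_combination -β*e02 - α*e13)).resolve_left hne
    have hg : g = 0 :=
      (mul_eq_zero.1 (show (α^2-β^2) * g = 0 by linear_combination -α*e02 - β*e13)).resolve_left hne
    have hc : c = 0 :=
      (mul_eq_zero.1 (show (α^2-β^2) * c = 0 by linear_combination β*e03 + α*e12)).resolve_left hne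
    have hh : h = 0 :=
      (mul_eq_zero.1 (show (α^2-β^2) * h = 0 by linear_combination -α*e03 - β*e12)).resolve_left hne
    have hj : j = 0 :=
      (mul_eq_zero.1 (show (α^2-β^2) * j = 0 by linear_combination α*e20 + β*e31)).resolve_left hne
    have hm : m = 0 :=
      (mul_eq_zero.1 (show (α^2-β^2) * m = 0 by linear_combination β*e20 + α*e31)).resolve_left hne
    have hi : i = 0 :=
      (mul_eq_zero.1 (show (α^2-β^2) * i = 0 by linear_combination -α*e21 - β*e30)).resolve_left hne
    have hn : n = 0 :=
      (mul_eq_zero.1 (show (α^2-β^2) * n = 0 by linear_combination β*e21 + α*e30)).resolve_left hne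
    have he : e = b := mul_left_cancel₀ hα (show α * e = α * b by linear_combination -e00)
    have hf : f = -a := mul_left_cancel₀ hα (show α * f = α * (-a) by linear_combination -e01)
    have ho : o = l := mul_left_cancel₀ hβ (show β * o = β * l by linear_combination -e22)
    have hp : p = -k := mul_left_cancel₀ hβ (show β * p = β * (-k) by linear_combination -e23)
    subst hd hg hc hh hj hm hi hn
    have hSM : !![a,b,0,0;e,f,0,0;0,0,k,l;0,0,o,p] = Mm a b k l := by
      rw [he, hf, ho, hp]; rfl
    rw [hSM] at h2 h3 h4 ⊢
    have H2 := Matrix.ext_iff.2 h2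
    have s00 := H2 0 0; have s22 := H2 2 2
    simp [Mm, Matrix.mul_apply, Fin.sum_univ_four, Matrix.one_apply, Matrix.vecHead,
      Matrix.vecTail] at s00 s22
    have ha2 : a^2 + b^2 = 1 := by linear_combination s00
    have hk2 : k^2 + l^2 = 1 := by linear_combination s22
    rw [Tpow4] at h3
    have q1 := Matrix.ext_iff.2 h3 0 0
    have q2 := Matrix.ext_iff.2 h3 2 2
    simp [Matrix.one_apply, Matrix.vecHead, Matrix.vecTail] at q1 q2
    have hab : a * b = 0 := sq_eq_zero_iff.1 (by nlinarith)
    have hkl : k * l = 0 := sq_eq_zero_iff.1 (by nlinarith)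
    have hA : (b = 0 ∧ (a = 1 ∨ a = -1)) ∨ (a = 0 ∧ (b = 1 ∨ b = -1)) := by
      rcases mul_eq_zero.1 hab with h' | h'
      · exact Or.inr ⟨h', mul_self_eq_one_iff.1 (by nlinarith)⟩
      · exact Or.inl ⟨h', mul_self_eq_one_iff.1 (by nlinarith)⟩
    have hK : (l = 0 ∧ (k = 1 ∨ k = -1)) ∨ (k = 0 ∧ (l = 1 ∨ l = -1)) := by
      rcases mul_eq_zero.1 hkl with h' | h'
      · exact Or.inr ⟨h', mul_self_eq_one_iff.1 (by nlinarith)⟩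
      · exact Or.inl ⟨h', mul_self_eq_one_iff.1 (by nlinarith)⟩
    rcases hA with ⟨rfl, rfl | rfl⟩ | ⟨rfl, rfl | rfl⟩ <;>
      rcases hK with ⟨rfl, rfl | rfl⟩ | ⟨rfl, rfl | rfl⟩
    -- (E0, E0)
    · exact absurd (by rw [pow_two, Tsq]; ext i j; fin_cases i <;> fin_cases j <;>
        simp [Matrix.one_apply, Matrix.vecHead, Matrix.vecTail]) h4
    -- (E0, E2)
    · exact absurd (by rw [pow_two, Tsq]; ext i j; fin_cases i <;> fin_cases j <;>
        simp [Matrix.one_apply, Matrix.vecHead, Matrix.vecTail]) h4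
    -- (E0, Pm)
    · exact Or.inr (Or.inr (Or.inr (Or.inr (Or.inl bs5.symm))))
    -- (E0, Nm)
    · exact Or.inr (Or.inr (Or.inr (Or.inr (Or.inr (Or.inl bs6.symm)))))
    -- (E2, E0)
    · exact absurd (by rw [pow_two, Tsq]; ext i j; fin_cases i <;> fin_cases j <;>
        simp [Matrix.one_apply, Matrix.vecHead, Matrix.vecTail]) h4
    -- (E2, E2)
    · exact absurd (by rw [pow_two, Tsq]; ext i j; fin_cases i <;> fin_cases j <;>
        simp [Matrix.one_apply, Matrix.vecHead, Matrix.vecTail]) h4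
    -- (E2, Pm)
    · exact Or.inr (Or.inr (Or.inl bs3.symm))
    -- (E2, Nm)
    · exact Or.inr (Or.inr (Or.inr (Or.inl bs4.symm)))
    -- (Pm, E0)
    · exact Or.inr (Or.inl bs2.symm)
    -- (Pm, E2)
    · exact Or.inr (Or.inr (Or.inr (Or.inr (Or.inr (Or.inr (Or.inr (Or.inr (Or.inl bs9.symm))))))))
    -- (Pm, Pm)
    · exact Or.inr (Or.inr (Or.inr (Or.inr (Or.inr (Or.inr (Or.inl bs7.symm))))))
    -- (Pm, Nm)
    · exact Or.inr (Or.inr (Or.inr (Or.inr (Or.inr (Or.inr (Or.inr (Or.inr (Or.inr (Or.inr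
        (Or.inl bs11.symm))))))))))
    -- (Nm, E0)
    · exact Or.inl bs1.symm
    -- (Nm, E2)
    · exact Or.inr (Or.inr (Or.inr (Or.inr (Or.inr (Or.inr (Or.inr (Or.inr (Or.inr
        (Or.inl bs10.symm)))))))))
    -- (Nm, Pm)
    · exact Or.inr (Or.inr (Or.inr (Or.inr (Or.inr (Or.inr (Or.inr (Or.inr (Or.inr (Or.inr
        (Or.inr bs12.symm))))))))))
    -- (Nm, Nm)
    · exact Or.inr (Or.inr (Or.inr (Or.inr (Or.inr (Or.inr (Or.inr (Or.inl bs8.symm)))))))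
  · rintro (rfl | rfl | rfl | rfl | rfl | rfl | rfl | rfl | rfl | rfl | rfl | rfl)
    · rw [bs1]; exact main_rev α β _ _ _ _ (by norm_num) (by norm_num) (by norm_num)
        (by norm_num) (by norm_num)
    · rw [bs2]; exact main_rev α β _ _ _ _ (by norm_num) (by norm_num) (by norm_num)
        (by norm_num) (by norm_num)
    · rw [bs3]; exact main_rev α β _ _ _ _ (by norm_num) (by norm_num) (by norm_num)
        (by norm_num) (by norm_num)
    · rw [bs4]; exact main_rev α β _ _ _ _ (by norm_num) (by norm_num) (by norm_num)
        (by norm_num) (by norm_num)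
    · rw [bs5]; exact main_rev α β _ _ _ _ (by norm_num) (by norm_num) (by norm_num)
        (by norm_num) (by norm_num)
    · rw [bs6]; exact main_rev α β _ _ _ _ (by norm_num) (by norm_num) (by norm_num)
        (by norm_num) (by norm_num)
    · rw [bs7]; exact main_rev α β _ _ _ _ (by norm_num) (by norm_num) (by norm_num)
        (by norm_num) (by norm_num)
    · rw [bs8]; exact main_rev α β _ _ _ _ (by norm_num) (by norm_num) (by norm_num)
        (by norm_num) (by norm_num)
    · rw [bs9]; exact main_rev α β _ _ _ _ (by norm_num) (by norm_num) (by norm_num)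
        (by norm_num) (by norm_num)
    · rw [bs10]; exact main_rev α β _ _ _ _ (by norm_num) (by norm_num) (by norm_num)
        (by norm_num) (by norm_num)
    · rw [bs11]; exact main_rev α β _ _ _ _ (by norm_num) (by norm_num) (by norm_num)
        (by norm_num) (by norm_num)
    · rw [bs12]; exact main_rev α β _ _ _ _ (by norm_num) (by norm_num) (by norm_num)
        (by norm_num) (by norm_num)
end

section
/- Let α, β ∈ ℝ, let g₁, g₂, g₃, g₄ : ℝ⁴ → ℝ, and define X : ℝ⁴ → ℝ⁴ by X(x) = A(α,β)·x + (g₁(x), g₂(x), g₃(x), g₄(x)). Let T be the 4×4 matrix with rows (0,1,0,0), (1,0,0,0), (0,0,1,0), (0,0,0,−1). Then X is both R₀-reversible and T-reversible if and only if for all (x₁,x₂,y₁,y₂) ∈ ℝ⁴: g₁(x₁,x₂,y₁,y₂) = −g₁(x₁,−x₂,y₁,−y₂) = −g₂(x₂,x₁,y₁,−y₂); g₂(x₁,x₂,y₁,y₂) = g₂(x₁,−x₂,y₁,−y₂) = −g₁(x₂,x₁,y₁,−y₂); g₃(x₁,x₂,y₁,y₂) = −g₃(x₁,−x₂,y₁,−y₂)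 = −g₃(x₂,x₁,y₁,−y₂); g₄(x₁,x₂,y₁,y₂) = g₄(x₁,−x₂,y₁,−y₂) = g₄(x₂,x₁,y₁,−y₂). Moreover, these conditions imply g₁(x₁,0,y₁,0) = g₃(x₁,0,y₁,0) = 0 for all x₁, y₁ ∈ ℝ. -/
open Matrix

lemma R0_mulVec (a b c d : ℝ) : R0 *ᵥ ![a, b, c, d] = ![a, -b, c, -d] := by
  funext i; fin_cases i <;>
    simp [R0, Matrix.mulVec, dotProduct, Fin.sum_univ_four]

lemma T_mulVec (a b c d : ℝ) :
    !![(0:ℝ), 1, 0, 0; 1, 0, 0, 0; 0, 0, 1, 0; 0, 0, 0, -1] *ᵥ ![a, b, c, d]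
      = ![b, a, c, -d] := by
  funext i; fin_cases i <;>
    simp [Matrix.mulVec, dotProduct, Fin.sum_univ_four]

lemma Amat_mulVec (α β a b c d : ℝ) :
    Amat α β *ᵥ ![a, b, c, d] = ![-α * b, α * a, -β * d, β * c] := by
  funext i; fin_cases i <;>
    simp [Amat, Matrix.mulVec, dotProduct, Fin.sum_univ_four]

theorem stmt_12 (α β : ℝ) (g₁ g₂ g₃ g₄ : (Fin 4 → ℝ) → ℝ)
    (X : (Fin 4 → ℝ) → (Fin 4 → ℝ))
    (hX : ∀ x, X x = Amat α β *ᵥ x + ![g₁ x, g₂ x, g₃ x, g₄ x])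
    (T : Matrix (Fin 4) (Fin 4) ℝ)
    (hT : T = !![0, 1, 0, 0; 1, 0, 0, 0; 0, 0, 1, 0; 0, 0, 0, -1]) :
    ((MRev R0 X ∧ MRev T X) ↔
      (∀ x₁ x₂ y₁ y₂ : ℝ,
        (g₁ ![x₁, x₂, y₁, y₂] = -g₁ ![x₁, -x₂, y₁, -y₂] ∧
         g₁ ![x₁, x₂, y₁, y₂] = -g₂ ![x₂, x₁, y₁, -y₂]) ∧
        (g₂ ![x₁, x₂, y₁, y₂] = g₂ ![x₁, -x₂, y₁, -y₂] ∧
         g₂ ![x₁, x₂, y₁, y₂] = -g₁ ![x₂, x₁, y₁, -y₂]) ∧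
        (g₃ ![x₁, x₂, y₁, y₂] = -g₃ ![x₁, -x₂, y₁, -y₂] ∧
         g₃ ![x₁, x₂, y₁, y₂] = -g₃ ![x₂, x₁, y₁, -y₂]) ∧
        (g₄ ![x₁, x₂, y₁, y₂] = g₄ ![x₁, -x₂, y₁, -y₂] ∧
         g₄ ![x₁, x₂, y₁, y₂] = g₄ ![x₂, x₁, y₁, -y₂]))) ∧
    ((∀ x₁ x₂ y₁ y₂ : ℝ,
        (g₁ ![x₁, x₂, y₁, y₂] = -g₁ ![x₁, -x₂, y₁, -y₂] ∧
         g₁ ![x₁, x₂, y₁, y₂] = -g₂ ![x₂, x₁, y₁, -y₂]) ∧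
        (g₂ ![x₁, x₂, y₁, y₂] = g₂ ![x₁, -x₂, y₁, -y₂] ∧
         g₂ ![x₁, x₂, y₁, y₂] = -g₁ ![x₂, x₁, y₁, -y₂]) ∧
        (g₃ ![x₁, x₂, y₁, y₂] = -g₃ ![x₁, -x₂, y₁, -y₂] ∧
         g₃ ![x₁, x₂, y₁, y₂] = -g₃ ![x₂, x₁, y₁, -y₂]) ∧
        (g₄ ![x₁, x₂, y₁, y₂] = g₄ ![x₁, -x₂, y₁, -y₂] ∧
         g₄ ![x₁, x₂, y₁, y₂] = g₄ ![x₂, x₁, y₁, -y₂])) →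
      ∀ x₁ y₁ : ℝ, g₁ ![x₁, 0, y₁, 0] = 0 ∧ g₃ ![x₁, 0, y₁, 0] = 0) := by
  subst hT
  constructor
  · constructor
    · rintro ⟨h0, hT2⟩ x₁ x₂ y₁ y₂
      have e0 := h0 ![x₁, x₂, y₁, y₂]
      have eT := hT2 ![x₁, x₂, y₁, y₂]
      simp only [hX, Matrix.mulVec_add, R0_mulVec, Amat_mulVec] at e0
      simp only [hX, Matrix.mulVec_add, T_mulVec, Amat_mulVec] at eT
      have c00 := congrFun e0 0
      have c01 := congrFun e0 1
      have c02 := congrFun e0 2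
      have c03 := congrFun e0 3
      have cT0 := congrFun eT 0
      have cT1 := congrFun eT 1
      have cT2 := congrFun eT 2
      have cT3 := congrFun eT 3
      simp at c00 c01 c02 c03 cT0 cT1 cT2 cT3
      refine ⟨⟨by linarith, by linarith⟩, ⟨by linarith, by linarith⟩,
        ⟨by linarith, by linarith⟩, ⟨by linarith, by linarith⟩⟩
    · intro h
      constructor <;> intro x <;> rw [vec4_eta x]
      · obtain ⟨⟨h11, _⟩, ⟨h21, _⟩, ⟨h31, _⟩, ⟨h41, _⟩⟩ := h (x 0) (x 1) (x 2) (x 3)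
        simp only [hX, Matrix.mulVec_add, R0_mulVec, Amat_mulVec]
        funext i; fin_cases i <;> simp <;> linarith
      · obtain ⟨⟨_, h12⟩, ⟨_, h22⟩, ⟨_, h32⟩, ⟨_, h42⟩⟩ := h (x 0) (x 1) (x 2) (x 3)
        simp only [hX, Matrix.mulVec_add, T_mulVec, Amat_mulVec]
        funext i; fin_cases i <;> simp <;> linarith
  · intro h x₁ y₁
    have h1 := (h x₁ 0 y₁ 0).1.1
    have h3 := (h x₁ 0 y₁ 0).2.2.1.1
    simp at h1 h3
    constructor <;> linarith
end

section
/- Let b ∈ ℂ and p, q ∈ ℕ with p ≥ 1 and q ≥ 1, and define v : ℂ × ℂ → ℂ × ℂ by v(z₁, z₂) = (b·(conj(z₁))^(q−1)·z₂^p, 0). Define φ₁ : ℂ × ℂ → ℂ × ℂ by φ₁(w₁, w₂) = (i·conj(w₁), conj(w₂)). Then v is φ₁-reversible, i.e. φ₁(v(z₁,z₂)) = −v(φ₁(z₁,z₂)) for all (z₁,z₂) ∈ ℂ², if and only if conj(b) = −(−i)^q·b. Consequently, φ₁-reversibility of v implies: if q ≡ 0 (mod 4) then Re(b) = 0; if q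 ≡ 1 (mod 4) then Re(b) = −Im(b); if q ≡ 2 (mod 4) then Im(b) = 0; if q ≡ 3 (mod 4) then Re(b) = Im(b). -/
open Complex

theorem stmt_15 (b : ℂ) (p q : ℕ) (hp : 1 ≤ p) (hq : 1 ≤ q)
    (v : ℂ × ℂ → ℂ × ℂ)
    (hv : ∀ z : ℂ × ℂ, v z = (b * ((starRingEnd ℂ) z.1) ^ (q - 1) * z.2 ^ p, 0))
    (φ₁ : ℂ × ℂ → ℂ × ℂ)
    (hφ₁ : ∀ w : ℂ × ℂ, φ₁ w = (Complex.I * (starRingEnd ℂ) w.1, (starRingEnd ℂ) w.2)) :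
    ((∀ z : ℂ × ℂ, φ₁ (v z) = -v (φ₁ z)) ↔ (starRingEnd ℂ) b = -(-Complex.I) ^ q * b) ∧
    ((∀ z : ℂ × ℂ, φ₁ (v z) = -v (φ₁ z)) →
      (q % 4 = 0 → b.re = 0) ∧
      (q % 4 = 1 → b.re = -b.im) ∧
      (q % 4 = 2 → b.im = 0) ∧
      (q % 4 = 3 → b.re = b.im)) := by
  obtain ⟨m, rfl⟩ : ∃ m, q = m + 1 := ⟨q - 1, (Nat.succ_pred_eq_of_pos hq).symm⟩
  have key : (∀ z : ℂ × ℂ, φ₁ (v z) = -v (φ₁ z)) ↔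
      (starRingEnd ℂ) b = -(-Complex.I) ^ (m + 1) * b := by
    constructor
    · intro h
      have := h (1, 1)
      simp [hv, hφ₁, Prod.ext_iff, map_mul, map_pow] at this
      linear_combination (-Complex.I) * this + ((starRingEnd ℂ) b) * Complex.I_sq
    · intro h z
      simp only [hv, hφ₁, Prod.ext_iff, map_mul, map_pow, map_one, conj_conj, Complex.conj_I,
        Nat.add_sub_cancel, mul_pow, Prod.neg_mk, map_zero, neg_zero, and_true]
      linear_combination (Complex.I * z.1 ^ m * ((starRingEnd ℂ) z.2) ^ p) * h +
        (b * z.1 ^ m * ((starRingEnd ℂ) z.2) ^ p * (-Complex.I) ^ m) * Complex.I_sq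
  refine ⟨key, fun h => ?_⟩
  have hb := key.mp h
  have h4 : (-Complex.I) ^ (4 : ℕ) = 1 := by
    have : ((-Complex.I) ^ 2) ^ 2 = 1 := by rw [neg_pow, Complex.I_sq]; norm_num
    rw [← this]; ring
  have hmod : (-Complex.I) ^ (m + 1) = (-Complex.I) ^ ((m + 1) % 4) := by
    conv_lhs => rw [← Nat.div_add_mod (m + 1) 4]
    rw [pow_add, pow_mul, h4, one_pow, one_mul]
  rw [hmod] at hb
  refine ⟨fun h0 => ?_, fun h1 => ?_, fun h2 => ?_, fun h3 => ?_⟩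
  · rw [h0] at hb; simp [Complex.ext_iff] at hb
    linarith [hb]
  · rw [h1] at hb; simp [Complex.ext_iff] at hb
    linarith [hb.1, hb.2]
  · rw [h2] at hb; simp [Complex.ext_iff] at hb
    linarith [hb]
  · rw [h3] at hb
    have h3' : (-Complex.I) ^ 3 = Complex.I := by
      have : (-Complex.I) ^ 3 = -(Complex.I ^ 2 * Complex.I) := by ring
      rw [this, Complex.I_sq]; ring
    rw [h3'] at hb
    simp [Complex.ext_iff] at hb
    linarith [hb.1, hb.2]
end

section
/- Let b ∈ ℂ and p, q ∈ ℕ with p ≥ 1 and q ≥ 1, and define v : ℂ × ℂ → ℂ × ℂ by v(z₁, z₂) = (b·(conj(z₁))^(q−1)·z₂^p, 0). Define φ₂ : ℂ × ℂ → ℂ × ℂ by φ₂(w₁, w₂) = (−conj(w₁), −conj(i·w₂)). Then v is φ₂-reversible, i.e. φ₂(v(z₁,z₂)) = −v(φ₂(z₁,z₂)) for all (z₁,z₂) ∈ ℂ², if and only if conj(b) = (−1)^(q−1)·i^p·b. -/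
open Complex

theorem stmt_16 (b : ℂ) (p q : ℕ) (hp : 1 ≤ p) (hq : 1 ≤ q)
    (v : ℂ × ℂ → ℂ × ℂ)
    (hv : ∀ z : ℂ × ℂ, v z = (b * ((starRingEnd ℂ) z.1) ^ (q - 1) * z.2 ^ p, 0))
    (φ₂ : ℂ × ℂ → ℂ × ℂ)
    (hφ₂ : ∀ w : ℂ × ℂ,
      φ₂ w = (-(starRingEnd ℂ) w.1, -(starRingEnd ℂ) (Complex.I * w.2))) :
    (∀ z : ℂ × ℂ, φ₂ (v z) = -v (φ₂ z)) ↔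
      (starRingEnd ℂ) b = (-1) ^ (q - 1) * Complex.I ^ p * b := by
  constructor
  · intro h
    have h1 := congrArg Prod.fst (h (1, 1))
    simp only [hv, hφ₂, map_one, one_pow, map_mul, map_pow, map_neg, Prod.fst_neg,
      Complex.conj_I, Complex.conj_conj, neg_neg, mul_one] at h1
    have h2 : (starRingEnd ℂ) b = b * (-1) ^ (q - 1) * Complex.I ^ p := by
      linear_combination -h1
    rw [h2]; ring
  · intro hb z
    simp only [hv, hφ₂, map_mul, map_pow, map_neg, Complex.conj_I, Complex.conj_conj,
      mul_zero, neg_zero, map_zero, neg_neg]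
    refine Prod.ext ?_ (by simp)
    simp only [Prod.fst_neg]
    rw [hb, neg_pow, neg_pow, neg_mul, neg_neg, mul_pow]
    ring
end

section
/- Let a ∈ ℂ and p, q, n ∈ ℕ with p ≥ 1, q ≥ 1, n ≥ 1, q ≡ 1 (mod 4), and n not divisible by 4. Define v : ℂ × ℂ → ℂ × ℂ by v(z₁, z₂) = (a·(conj(z₁))^(n·q−1)·z₂^(n·p), 0), and let φ₀(w₁, w₂) = (−conj(w₁), −conj(w₂)) and φ₁(w₁, w₂) = (i·conj(w₁), conj(w₂)). If v is both φ₀-reversible and φ₁-reversible (i.e. φⱼ(v(z)) = −v(φⱼ(z)) for all z ∈ ℂ² and j = 0, 1), then a = 0. -/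
open Complex

theorem stmt_17 (a : ℂ) (p q n : ℕ) (hp : 1 ≤ p) (hq : 1 ≤ q) (hn : 1 ≤ n)
    (hq4 : q % 4 = 1) (hn4 : ¬ (4 ∣ n))
    (v : ℂ × ℂ → ℂ × ℂ)
    (hv : ∀ z : ℂ × ℂ, v z = (a * ((starRingEnd ℂ) z.1) ^ (n * q - 1) * z.2 ^ (n * p), 0))
    (φ₀ φ₁ : ℂ × ℂ → ℂ × ℂ)
    (hφ₀ : ∀ w : ℂ × ℂ, φ₀ w = (-(starRingEnd ℂ) w.1, -(starRingEnd ℂ) w.2))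
    (hφ₁ : ∀ w : ℂ × ℂ, φ₁ w = (Complex.I * (starRingEnd ℂ) w.1, (starRingEnd ℂ) w.2))
    (hrev₀ : ∀ z : ℂ × ℂ, φ₀ (v z) = -v (φ₀ z))
    (hrev₁ : ∀ z : ℂ × ℂ, φ₁ (v z) = -v (φ₁ z)) :
    a = 0 := by
  have h0 := hrev₀ (1,1)
  have h1 := hrev₁ (1,1)
  simp only [hv, hφ₀, hφ₁, map_one, one_pow, mul_one, map_neg, map_mul, map_pow,
    Prod.mk.injEq, Prod.neg_mk, neg_zero, map_zero, conj_I] at h0 h1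
  obtain ⟨h0, -⟩ := h0
  obtain ⟨h1, -⟩ := h1
  have key : a * (I * (-1:ℂ) ^ (n*q-1) * (-1:ℂ)^(n*p) + (-I)^(n*q-1)) = 0 := by
    linear_combination I * h0 + h1
  have hnq1 : 1 ≤ n * q := Nat.one_le_iff_ne_zero.mpr (by positivity)
  have hnq : n * q % 4 = n % 4 := by
    conv_lhs => rw [Nat.mul_mod, hq4]
    omega
  have hI4 : ∀ m : ℕ, (-I:ℂ)^m = (-I)^(m % 4) := by
    intro m
    have h4 : (-I:ℂ)^4 = 1 := by
      have hi : (I:ℂ)^4 = 1 := by rw [show (4:ℕ) = 2*2 from rfl, pow_mul, I_sq]; norm_num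
      rw [Even.neg_pow (⟨2, rfl⟩ : Even 4), hi]
    conv_lhs => rw [← Nat.div_add_mod m 4, pow_add, pow_mul, h4, one_pow, one_mul]
  have h14 : ∀ m : ℕ, ((-1:ℂ))^m = (-1)^(m % 2) := by
    intro m
    conv_lhs => rw [← Nat.div_add_mod m 2, pow_add, pow_mul]
    norm_num
  rw [hI4 (n*q-1), h14 (n*q-1), h14 (n*p)] at key
  rcases (by omega : n % 4 = 1 ∨ n % 4 = 2 ∨ n % 4 = 3) with hr | hr | hr
  · have hM4 : (n*q-1) % 4 = 0 := by omega
    have hM2 : (n*q-1) % 2 = 0 := by omega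
    rw [hM4, hM2] at key
    rcases (by omega : (n*p) % 2 = 0 ∨ (n*p) % 2 = 1) with hN | hN <;> rw [hN] at key <;>
      rcases mul_eq_zero.mp key with h | h <;>
      first
        | exact h
        | (exfalso; revert h; simp [Complex.ext_iff])
  · have hM4 : (n*q-1) % 4 = 1 := by omega
    have hM2 : (n*q-1) % 2 = 1 := by omega
    have hN : (n*p) % 2 = 0 := by
      have h2 : n % 2 = 0 := by omega
      rw [Nat.mul_mod, h2]; simp
    rw [hM4, hM2, hN] at key
    rcases mul_eq_zero.mp key with h | h
    · exact h
    · exfalso; revert h; simp [Complex.ext_iff]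
  · have hM4 : (n*q-1) % 4 = 2 := by omega
    have hM2 : (n*q-1) % 2 = 0 := by omega
    rw [hM4, hM2] at key
    rcases (by omega : (n*p) % 2 = 0 ∨ (n*p) % 2 = 1) with hN | hN <;> rw [hN] at key <;>
      rcases mul_eq_zero.mp key with h | h <;>
      first
        | exact h
        | (exfalso; revert h; simp [Complex.ext_iff])
end

section
/- Let c ∈ ℂ and p, q, m ∈ ℕ with p ≥ 1, q ≥ 1, m ≥ 1, q ≡ 1 (mod 4), and m not divisible by 4. Define v : ℂ × ℂ → ℂ × ℂ by v(z₁, z₂) = (c·z₁·(z₁^q·(conj(z₂))^p)^m, 0), and let φ₀(w₁, w₂) = (−conj(w₁), −conj(w₂)) and φ₁(w₁, w₂) = (i·conj(w₁), conj(w₂)). If v is both φ₀-reversible and φ₁-reversible (i.e. φⱼ(v(z)) = −v(φⱼ(z)) for all z ∈ ℂ² and j = 0, 1), then c = 0. -/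
open Complex

theorem stmt_18 (c : ℂ) (p q m : ℕ) (hp : 1 ≤ p) (hq : 1 ≤ q) (hm : 1 ≤ m)
    (hq4 : q % 4 = 1) (hm4 : ¬ (4 ∣ m))
    (v : ℂ × ℂ → ℂ × ℂ)
    (hv : ∀ z : ℂ × ℂ, v z = (c * z.1 * (z.1 ^ q * ((starRingEnd ℂ) z.2) ^ p) ^ m, 0))
    (φ₀ φ₁ : ℂ × ℂ → ℂ × ℂ)
    (hφ₀ : ∀ w : ℂ × ℂ, φ₀ w = (-(starRingEnd ℂ) w.1, -(starRingEnd ℂ) w.2))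
    (hφ₁ : ∀ w : ℂ × ℂ, φ₁ w = (Complex.I * (starRingEnd ℂ) w.1, (starRingEnd ℂ) w.2))
    (hrev₀ : ∀ z : ℂ × ℂ, φ₀ (v z) = -v (φ₀ z))
    (hrev₁ : ∀ z : ℂ × ℂ, φ₁ (v z) = -v (φ₁ z)) :
    c = 0 := by
  have e1 := congrArg Prod.fst (hrev₁ (1, 1))
  have e0 := congrArg Prod.fst (hrev₀ (1, 1))
  simp only [hv, hφ₁, hφ₀, map_one, one_pow, map_mul, map_pow, Prod.fst_neg, map_neg,
    mul_one, map_zero, neg_neg] at e1 e0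
  obtain ⟨k, hk⟩ : ∃ k, q = 4 * k + 1 := ⟨q / 4, by omega⟩
  have hIq : Complex.I ^ q = Complex.I := by
    rw [hk, pow_succ, pow_mul, Complex.I_pow_four, one_pow, one_mul]
  have hqodd : Odd q := ⟨2 * k, by omega⟩
  have hneg : ((-1 : ℂ)) ^ q = -1 := hqodd.neg_one_pow
  rw [hIq] at e1
  rw [hneg] at e0
  have h1 : (starRingEnd ℂ) c = -(c * Complex.I ^ m) := by
    apply mul_left_cancel₀ Complex.I_ne_zero
    rw [e1]; ring
  have h0 : (starRingEnd ℂ) c = -(c * ((-1) * (-1 : ℂ) ^ p) ^ m) := by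
    linear_combination -e0
  have key : c * Complex.I ^ m = c * ((-1) * (-1 : ℂ) ^ p) ^ m := by
    linear_combination h1 - h0
  by_contra hc
  have hIm : Complex.I ^ m = ((-1) * (-1 : ℂ) ^ p) ^ m := mul_left_cancel₀ hc key
  have ha2 : (((-1) * (-1 : ℂ) ^ p)) ^ 2 = 1 := by
    rw [mul_pow, neg_one_sq, one_mul, ← pow_mul, mul_comm, pow_mul, neg_one_sq, one_pow]
  have hsq : ((-1 : ℂ)) ^ m = 1 := by
    calc ((-1 : ℂ)) ^ m = (Complex.I ^ 2) ^ m := by rw [Complex.I_sq]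
    _ = (Complex.I ^ m) ^ 2 := by ring
    _ = ((((-1) * (-1 : ℂ) ^ p)) ^ m) ^ 2 := by rw [hIm]
    _ = ((((-1) * (-1 : ℂ) ^ p)) ^ 2) ^ m := by rw [← pow_mul, mul_comm m 2, pow_mul]
    _ = 1 := by rw [ha2, one_pow]
  have hme : Even m := by
    rcases Nat.even_or_odd m with h | h
    · exact h
    · exfalso; rw [h.neg_one_pow] at hsq; norm_num at hsq
  obtain ⟨k', hk'⟩ := hme
  have hk'odd : Odd k' := by
    rcases Nat.even_or_odd k' with ⟨t, ht⟩ | h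
    · exact absurd ⟨t, by omega⟩ hm4
    · exact h
  have hImneg : Complex.I ^ m = -1 := by
    calc Complex.I ^ m = (Complex.I ^ 2) ^ k' := by rw [← pow_mul]; congr 1; omega
    _ = ((-1 : ℂ)) ^ k' := by rw [Complex.I_sq]
    _ = -1 := hk'odd.neg_one_pow
  have hapos : (((-1) * (-1 : ℂ) ^ p)) ^ m = 1 := by
    calc (((-1) * (-1 : ℂ) ^ p)) ^ m = ((((-1) * (-1 : ℂ) ^ p)) ^ 2) ^ k' := by
          rw [← pow_mul]; congr 1; omega
    _ = 1 := by rw [ha2, one_pow]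
  rw [hImneg, hapos] at hIm
  norm_num at hIm
end

section
/- Let c ∈ ℂ and p, q, m ∈ ℕ with p ≥ 1, q ≥ 1, m ≥ 1, q ≡ 1 (mod 4), and m not divisible by 4. Define v : ℂ × ℂ → ℂ × ℂ by v(z₁, z₂) = (c·z₁·((conj(z₁))^q·z₂^p)^m, 0), and let φ₀(w₁, w₂) = (−conj(w₁), −conj(w₂)) and φ₁(w₁, w₂) = (i·conj(w₁), conj(w₂)). If v is both φ₀-reversible and φ₁-reversible (i.e. φⱼ(v(z)) = −v(φⱼ(z)) for all z ∈ ℂ² and j = 0, 1), then c = 0. -/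
open Complex

theorem stmt_19 (c : ℂ) (p q m : ℕ) (hp : 1 ≤ p) (hq : 1 ≤ q) (hm : 1 ≤ m)
    (hq4 : q % 4 = 1) (hm4 : ¬ (4 ∣ m))
    (v : ℂ × ℂ → ℂ × ℂ)
    (hv : ∀ z : ℂ × ℂ, v z = (c * z.1 * (((starRingEnd ℂ) z.1) ^ q * z.2 ^ p) ^ m, 0))
    (φ₀ φ₁ : ℂ × ℂ → ℂ × ℂ)
    (hφ₀ : ∀ w : ℂ × ℂ, φ₀ w = (-(starRingEnd ℂ) w.1, -(starRingEnd ℂ) w.2))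
    (hφ₁ : ∀ w : ℂ × ℂ, φ₁ w = (Complex.I * (starRingEnd ℂ) w.1, (starRingEnd ℂ) w.2))
    (hrev₀ : ∀ z : ℂ × ℂ, φ₀ (v z) = -v (φ₀ z))
    (hrev₁ : ∀ z : ℂ × ℂ, φ₁ (v z) = -v (φ₁ z)) :
    c = 0 := by
  have e0 := hrev₀ (1,1)
  have e1 := hrev₁ (1,1)
  simp only [hv, hφ₀, hφ₁, Prod.mk.injEq, Prod.neg_mk, Prod.fst, Prod.snd] at e0 e1
  obtain ⟨e0, -⟩ := e0
  obtain ⟨e1, -⟩ := e1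
  simp only [map_one, map_mul, one_pow, mul_one, map_pow, map_neg, Complex.conj_I] at e0 e1
  -- e0 : -(conj c) = -(c * -1 * ((-1) ^ q * (-1) ^ p) ^ m)
  -- e1 : I * conj c = -(c * I * ((-I) ^ q) ^ m)
  have hA : (starRingEnd ℂ) c = -(c * (-1) ^ ((q + p) * m)) := by
    rw [pow_mul, pow_add]
    linear_combination -e0
  have hB : (starRingEnd ℂ) c = -(c * (-Complex.I) ^ (q * m)) := by
    rw [pow_mul]
    refine mul_left_cancel₀ Complex.I_ne_zero ?_
    linear_combination e1
  have key : c * ((-1 : ℂ) ^ ((q + p) * m) - (-Complex.I) ^ (q * m)) = 0 := by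
    linear_combination hA - hB
  have h4 : ((-Complex.I : ℂ)) ^ 4 = 1 := by norm_num [pow_succ, Complex.I_mul_I]
  have hmod : (q * m) % 4 = m % 4 := by
    rw [Nat.mul_mod, hq4, one_mul, Nat.mod_mod_of_dvd _ dvd_rfl]
  have hBpow : (-Complex.I : ℂ) ^ (q * m) = (-Complex.I) ^ (m % 4) := by
    conv_lhs => rw [← Nat.div_add_mod (q * m) 4, pow_add, pow_mul, h4, one_pow, one_mul, hmod]
  rw [hBpow] at key
  rcases mul_eq_zero.mp key with h | h
  · exact h
  exfalso
  have hAB : (-1 : ℂ) ^ ((q + p) * m) = (-Complex.I) ^ (m % 4) := sub_eq_zero.mp h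
  have hsq : ((-1 : ℂ) ^ ((q + p) * m)) ^ 2 = 1 := by
    rw [← pow_mul, mul_comm, pow_mul, neg_one_sq, one_pow]
  have hr : m % 4 = 1 ∨ m % 4 = 2 ∨ m % 4 = 3 := by omega
  rcases hr with hr | hr | hr
  · rw [hAB, hr] at hsq
    norm_num [pow_succ, Complex.I_mul_I] at hsq
  · have hev : Even ((q + p) * m) := Even.mul_left (by rw [Nat.even_iff]; omega) _
    rw [hev.neg_one_pow, hr] at hAB
    norm_num [pow_succ, Complex.I_mul_I] at hAB
  · rw [hAB, hr] at hsq
    norm_num [pow_succ, Complex.I_mul_I] at hsq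
end
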